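/- arXiv:0711.0198 — 4 statements merged into one kernel-verified Lean document; each statement's English description precedes it below -/
import Mathlib

section
/- Let C be a symmetric positive definite 2×2 matrix with entries c11, c12, c22, let μ = (μ1, μ2) ∈ ℝ², q > 0, and let E = {z : (z−μ)ᵀC⁻¹(z−μ) ≤ q²}. For any r ∈ ℝ, the line L_r = {(x, rx) : x ∈ ℝ} intersects E if and only if (μ2 − r·μ1)² ≤ q²·(c22 − 2·r·c12 + r²·c11). -/
/-!
Restricted to the line, the quadratic form of `C⁻¹` centred at `μ` is a quadratic polynomial
in `x` whose leading coefficient, after clearing `det C`, is `S = c22 - 2 r c12 + r² c11`,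
the value of the form of `C` at `(r, -1)`, hence positive. Completing the square gives
`S · Q(x) = (S x - b)² / det C + (μ2 - r μ1)²`, so the minimum of `Q` over the line is
`(μ2 - r μ1)² / S`, attained at `x = b / S`.
-/

open Matrix

theorem exists_le_iff_of_mul_eq_sq_add {f : ℝ → ℝ} {S k b m c : ℝ} (hS : 0 < S) (hk : 0 ≤ k)
    (hf : ∀ x, S * f x = k * (S * x - b) ^ 2 + m) : (∃ x, f x ≤ c) ↔ m ≤ S * c := by
  constructor
  · rintro ⟨x, hx⟩
    calc m ≤ S * f x := by rw [hf x]; nlinarith [sq_nonneg (S * x - b)]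
      _ ≤ S * c := by gcongr
  · intro h
    refine ⟨b / S, le_of_mul_le_mul_left ?_ hS⟩
    rw [hf, mul_div_cancel₀ b hS.ne', sub_self]
    simpa using h

/-- Both sides vanish when the determinant does, since then `A⁻¹ = 0`. -/
theorem Matrix.dotProduct_inv_mulVec_fin_two (a b c d : ℝ) (v : Fin 2 → ℝ) :
    v ⬝ᵥ (!![a, b; c, d]⁻¹ *ᵥ v)
      = (d * v 0 ^ 2 - (b + c) * v 0 * v 1 + a * v 1 ^ 2) / (a * d - b * c) := by
  rw [inv_def, adjugate_fin_two_of, det_fin_two_of, Ring.inverse_eq_inv']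
  simp only [dotProduct, mulVec, Fin.sum_univ_two, smul_apply, of_apply, cons_val',
    cons_val_zero, cons_val_one, cons_val_fin_one, smul_eq_mul]
  ring

theorem Matrix.PosDef.fin_two_apply_pos {a b d : ℝ} (h : (!![a, b; b, d]).PosDef) {u v : ℝ}
    (huv : ![u, v] ≠ 0) : 0 < a * u ^ 2 + 2 * b * u * v + d * v ^ 2 := by
  have := h.dotProduct_mulVec_pos huv
  simp only [dotProduct, mulVec, Fin.sum_univ_two, Pi.star_apply, star_trivial, of_apply,
    cons_val', cons_val_zero, cons_val_one, cons_val_fin_one] at this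
  linarith

theorem Matrix.PosDef.fin_two_det_pos {a b d : ℝ} (h : (!![a, b; b, d]).PosDef) :
    0 < a * d - b * b := by
  simpa [det_fin_two_of] using h.det_pos

theorem stmt_2_general (c11 c12 c22 μ1 μ2 q r : ℝ)
    (hC : (!![c11, c12; c12, c22] : Matrix (Fin 2) (Fin 2) ℝ).PosDef) :
    (∃ x : ℝ, (![x, r * x] - ![μ1, μ2]) ⬝ᵥ
        ((!![c11, c12; c12, c22] : Matrix (Fin 2) (Fin 2) ℝ)⁻¹ *ᵥ
          (![x, r * x] - ![μ1, μ2])) ≤ q ^ 2)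
      ↔ (μ2 - r * μ1) ^ 2 ≤ q ^ 2 * (c22 - 2 * r * c12 + r ^ 2 * c11) := by
  have hD : 0 < c11 * c22 - c12 * c12 := hC.fin_two_det_pos
  have hS : 0 < c22 - 2 * r * c12 + r ^ 2 * c11 := by
    have := hC.fin_two_apply_pos (u := r) (v := -1) (by simp)
    linarith
  rw [exists_le_iff_of_mul_eq_sq_add hS (inv_nonneg.2 hD.le)
    (b := c22 * μ1 - c12 * (μ2 + r * μ1) + c11 * r * μ2), mul_comm]
  intro x
  rw [dotProduct_inv_mulVec_fin_two, div_eq_mul_inv]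
  simp only [Pi.sub_apply, cons_val_zero, cons_val_one]
  linear_combination (μ2 - r * μ1) ^ 2 * mul_inv_cancel₀ hD.ne'

/-- The line `L_r = {(x, rx)}` through the origin of slope `r` intersects the
filled covariance ellipse `E(C, μ, q)` if and only if Fieller's inequality
`(μ2 - r·μ1)² ≤ q²·(c22 - 2·r·c12 + r²·c11)` holds. -/
theorem stmt_2 (c11 c12 c22 μ1 μ2 q r : ℝ) (hq : 0 < q)
    (hC : (!![c11, c12; c12, c22] : Matrix (Fin 2) (Fin 2) ℝ).PosDef) :
    (∃ x : ℝ, (![x, r * x] - ![μ1, μ2]) ⬝ᵥ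
        ((!![c11, c12; c12, c22] : Matrix (Fin 2) (Fin 2) ℝ)⁻¹ *ᵥ
          (![x, r * x] - ![μ1, μ2])) ≤ q ^ 2)
      ↔ (μ2 - r * μ1) ^ 2 ≤ q ^ 2 * (c22 - 2 * r * c12 + r ^ 2 * c11) :=
  stmt_2_general c11 c12 c22 μ1 μ2 q r hC
end

section
/- Let C be a symmetric positive definite 2×2 matrix with entries c11, c12, c22 and μ = (μ1, μ2) ∈ ℝ², q > 0. If μᵀC⁻¹μ ≤ q² (i.e., the origin lies in the filled ellipse E(C,μ,q)), then for every r ∈ ℝ we have (μ2 − r·μ1)² ≤ q²·(c22 − 2·r·c12 + r²·c11). -/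
open Matrix

/-! With `v = (-r, 1)` one has `v ⬝ᵥ μ = μ₂ - r μ₁` and `v ⬝ᵥ C v = c₂₂ - 2 r c₁₂ + r² c₁₁`, so the
claim is the Cauchy–Schwarz inequality `(v ⬝ᵥ μ)² ≤ (v ⬝ᵥ C v) (μ ⬝ᵥ C⁻¹ μ)` for the inner product
defined by `C`, applied to `v` and `C⁻¹ μ`, followed by the hypothesis `μ ⬝ᵥ C⁻¹ μ ≤ q²`. -/

theorem Matrix.PosDef.dotProduct_sq_le {n : Type*} [Fintype n] [DecidableEq n]
    {C : Matrix n n ℝ} (hC : C.PosDef) (v μ : n → ℝ) :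
    (v ⬝ᵥ μ) ^ 2 ≤ (v ⬝ᵥ C *ᵥ v) * (μ ⬝ᵥ C⁻¹ *ᵥ μ) := by
  have hB : ∀ x, 0 ≤ C.toBilin' x x := fun x => by
    simpa [toBilin'_apply'] using hC.posSemidef.dotProduct_mulVec_nonneg x
  have hsymm : LinearMap.IsSymm C.toBilin' :=
    LinearMap.BilinForm.isSymm_iff.mp <| isSymm_toBilin'_iff_isSymm.mpr <|
      isHermitian_iff_isSymm.mp hC.isHermitian
  have hCC : C *ᵥ (C⁻¹ *ᵥ μ) = μ := by
    rw [mulVec_mulVec, mul_nonsing_inv _ ((isUnit_iff_isUnit_det C).mp hC.isUnit), one_mulVec]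
  have hCS := LinearMap.BilinForm.apply_sq_le_of_symm _ hB hsymm v (C⁻¹ *ᵥ μ)
  simpa only [toBilin'_apply', hCC, dotProduct_comm (C⁻¹ *ᵥ μ)] using hCS

theorem stmt_3_general (c11 c12 c22 μ1 μ2 q : ℝ)
    (hC : (!![c11, c12; c12, c22] : Matrix (Fin 2) (Fin 2) ℝ).PosDef)
    (h0 : ![μ1, μ2] ⬝ᵥ
        ((!![c11, c12; c12, c22] : Matrix (Fin 2) (Fin 2) ℝ)⁻¹ *ᵥ ![μ1, μ2]) ≤ q ^ 2) :
    ∀ r : ℝ, (μ2 - r * μ1) ^ 2 ≤ q ^ 2 * (c22 - 2 * r * c12 + r ^ 2 * c11) := by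
  intro r
  set C : Matrix (Fin 2) (Fin 2) ℝ := !![c11, c12; c12, c22]
  have hslope : ![-r, 1] ⬝ᵥ ![μ1, μ2] = μ2 - r * μ1 := by
    rw [vec2_dotProduct']
    ring
  have hform : ![-r, 1] ⬝ᵥ C *ᵥ ![-r, 1] = c22 - 2 * r * c12 + r ^ 2 * c11 := by
    simp only [C, vec2_dotProduct, mulVec, of_apply, cons_val', cons_val_zero, cons_val_one,
      cons_val_fin_one]
    ring
  have hform_nonneg : 0 ≤ ![-r, 1] ⬝ᵥ C *ᵥ ![-r, 1] := by
    simpa using hC.posSemidef.dotProduct_mulVec_nonneg ![-r, 1]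
  calc (μ2 - r * μ1) ^ 2
      ≤ (![-r, 1] ⬝ᵥ C *ᵥ ![-r, 1]) * (![μ1, μ2] ⬝ᵥ C⁻¹ *ᵥ ![μ1, μ2]) :=
        hslope ▸ hC.dotProduct_sq_le _ _
    _ ≤ (![-r, 1] ⬝ᵥ C *ᵥ ![-r, 1]) * q ^ 2 := mul_le_mul_of_nonneg_left h0 hform_nonneg
    _ = q ^ 2 * (c22 - 2 * r * c12 + r ^ 2 * c11) := by rw [hform, mul_comm]

/-- Completely unbounded case: if the origin lies in the filled ellipse
`E(C, μ, q)`, i.e. `μᵀC⁻¹μ ≤ q²`, then every slope `r` satisfies Fieller's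
inequality. -/
theorem stmt_3 (c11 c12 c22 μ1 μ2 q : ℝ) (hq : 0 < q)
    (hC : (!![c11, c12; c12, c22] : Matrix (Fin 2) (Fin 2) ℝ).PosDef)
    (h0 : ![μ1, μ2] ⬝ᵥ
        ((!![c11, c12; c12, c22] : Matrix (Fin 2) (Fin 2) ℝ)⁻¹ *ᵥ ![μ1, μ2]) ≤ q ^ 2) :
    ∀ r : ℝ, (μ2 - r * μ1) ^ 2 ≤ q ^ 2 * (c22 - 2 * r * c12 + r ^ 2 * c11) :=
  stmt_3_general c11 c12 c22 μ1 μ2 q hC h0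
end

section
/- Let C, μ, q be as above with c11, c12, c22 the entries of C. If μ1² > q²·c11, then the set {r ∈ ℝ : (μ2 − r·μ1)² ≤ q²·(c22 − 2·r·c12 + r²·c11)} equals the closed interval [min(l1,l2), max(l1,l2)], where l1,2 = ((μ1μ2 − q²c12) ± √((μ1μ2 − q²c12)² − (μ1² − q²c11)(μ2² − q²c22))) / (μ1² − q²c11); in particular the discriminant (μ1μ2 − q²c12)² − (μ1² − q²c11)(μ2² − q²c22) is nonnegative in this case. -/
/-!
Writing `a = μ1² - q²c11`, `b = μ1μ2 - q²c12`, `c = μ2² - q²c22`, Fieller's inequality reads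
`a r² - 2 b r + c ≤ 0`. At `r = μ2/μ1` its left side is `-q² (c22 - 2 r c12 + r² c11) ≤ 0` by
positivity of `C`, so the reduced discriminant `b² - a c` is nonnegative, and for `a > 0` the
solution set of the inequality is the interval between the two roots.
-/

open Matrix Set

theorem Matrix.PosSemidef.fin_two_quadForm_nonneg {a b c : ℝ}
    (h : (!![a, b; b, c] : Matrix (Fin 2) (Fin 2) ℝ).PosSemidef) (x y : ℝ) :
    0 ≤ a * x ^ 2 + 2 * b * x * y + c * y ^ 2 := by
  have := h.dotProduct_mulVec_nonneg ![x, y]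
  simp only [mulVec, dotProduct, Fin.sum_univ_two, star_trivial, of_apply, cons_val',
    cons_val_zero, cons_val_one, empty_val', cons_val_fin_one] at this
  linarith

theorem reduced_discrim_nonneg_of_quadratic_nonpos {a b c x : ℝ} (ha : 0 ≤ a)
    (h : a * x ^ 2 - 2 * b * x + c ≤ 0) : 0 ≤ b ^ 2 - a * c := by
  nlinarith [sq_nonneg (a * x - b), mul_nonneg ha (neg_nonneg.2 h)]

theorem setOf_quadratic_nonpos_eq_Icc {a b c : ℝ} (ha : 0 < a) (hd : 0 ≤ b ^ 2 - a * c) :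
    {r : ℝ | a * r ^ 2 - 2 * b * r + c ≤ 0} =
      Icc ((b - √(b ^ 2 - a * c)) / a) ((b + √(b ^ 2 - a * c)) / a) := by
  ext r
  have hsq : a * r ^ 2 - 2 * b * r + c ≤ 0 ↔ (a * r - b) ^ 2 ≤ b ^ 2 - a * c := by
    constructor <;> intro h <;> nlinarith
  rw [mem_ofPred_eq, hsq, Real.sq_le hd, mem_Icc, div_le_iff₀ ha, le_div_iff₀ ha]
  constructor <;> rintro ⟨h₁, h₂⟩ <;> constructor <;> linarith

theorem stmt_4_general (c11 c12 c22 μ1 μ2 q : ℝ)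
    (hC : (!![c11, c12; c12, c22] : Matrix (Fin 2) (Fin 2) ℝ).PosDef)
    (hb : μ1 ^ 2 > q ^ 2 * c11) :
    0 ≤ (μ1 * μ2 - q ^ 2 * c12) ^ 2 - (μ1 ^ 2 - q ^ 2 * c11) * (μ2 ^ 2 - q ^ 2 * c22) ∧
    {r : ℝ | (μ2 - r * μ1) ^ 2 ≤ q ^ 2 * (c22 - 2 * r * c12 + r ^ 2 * c11)}
      = Set.Icc
        (min
          (((μ1 * μ2 - q ^ 2 * c12) +
              Real.sqrt ((μ1 * μ2 - q ^ 2 * c12) ^ 2 -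
                (μ1 ^ 2 - q ^ 2 * c11) * (μ2 ^ 2 - q ^ 2 * c22))) /
            (μ1 ^ 2 - q ^ 2 * c11))
          (((μ1 * μ2 - q ^ 2 * c12) -
              Real.sqrt ((μ1 * μ2 - q ^ 2 * c12) ^ 2 -
                (μ1 ^ 2 - q ^ 2 * c11) * (μ2 ^ 2 - q ^ 2 * c22))) /
            (μ1 ^ 2 - q ^ 2 * c11)))
        (max
          (((μ1 * μ2 - q ^ 2 * c12) +
              Real.sqrt ((μ1 * μ2 - q ^ 2 * c12) ^ 2 -
                (μ1 ^ 2 - q ^ 2 * c11) * (μ2 ^ 2 - q ^ 2 * c22))) /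
            (μ1 ^ 2 - q ^ 2 * c11))
          (((μ1 * μ2 - q ^ 2 * c12) -
              Real.sqrt ((μ1 * μ2 - q ^ 2 * c12) ^ 2 -
                (μ1 ^ 2 - q ^ 2 * c11) * (μ2 ^ 2 - q ^ 2 * c22))) /
            (μ1 ^ 2 - q ^ 2 * c11))) := by
  have hQ := hC.posSemidef.fin_two_quadForm_nonneg
  set a := μ1 ^ 2 - q ^ 2 * c11 with ha_def
  set b := μ1 * μ2 - q ^ 2 * c12 with hb_def
  set c := μ2 ^ 2 - q ^ 2 * c22 with hc_def
  have ha : 0 < a := sub_pos.2 hb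
  have hμ1 : μ1 ≠ 0 := by
    rintro rfl
    nlinarith [hQ 1 0, sq_nonneg q]
  have hfieller (r : ℝ) : a * r ^ 2 - 2 * b * r + c =
      (μ2 - r * μ1) ^ 2 - q ^ 2 * (c22 - 2 * r * c12 + r ^ 2 * c11) := by
    rw [ha_def, hb_def, hc_def]; ring
  have hd : 0 ≤ b ^ 2 - a * c := by
    refine reduced_discrim_nonneg_of_quadratic_nonpos ha.le (x := μ2 / μ1) ?_
    rw [hfieller, div_mul_cancel₀ μ2 hμ1, sub_self]
    nlinarith [hQ (-(μ2 / μ1)) 1, sq_nonneg q]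
  have hle : (b - √(b ^ 2 - a * c)) / a ≤ (b + √(b ^ 2 - a * c)) / a :=
    div_le_div_of_nonneg_right (by linarith [Real.sqrt_nonneg (b ^ 2 - a * c)]) ha.le
  refine ⟨hd, ?_⟩
  rw [min_eq_right hle, max_eq_left hle, ← setOf_quadratic_nonpos_eq_Icc ha hd]
  simp only [hfieller, sub_nonpos]

/-- Bounded case of Fieller's theorem: if `μ1² > q²·c11`, the discriminant of
Fieller's quadratic is nonnegative and the solution set of Fieller's inequality
is the closed interval `[min(l1,l2), max(l1,l2)]`. -/
theorem stmt_4 (c11 c12 c22 μ1 μ2 q : ℝ) (hq : 0 < q)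
    (hC : (!![c11, c12; c12, c22] : Matrix (Fin 2) (Fin 2) ℝ).PosDef)
    (hb : μ1 ^ 2 > q ^ 2 * c11) :
    0 ≤ (μ1 * μ2 - q ^ 2 * c12) ^ 2 - (μ1 ^ 2 - q ^ 2 * c11) * (μ2 ^ 2 - q ^ 2 * c22) ∧
    {r : ℝ | (μ2 - r * μ1) ^ 2 ≤ q ^ 2 * (c22 - 2 * r * c12 + r ^ 2 * c11)}
      = Set.Icc
        (min
          (((μ1 * μ2 - q ^ 2 * c12) +
              Real.sqrt ((μ1 * μ2 - q ^ 2 * c12) ^ 2 -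
                (μ1 ^ 2 - q ^ 2 * c11) * (μ2 ^ 2 - q ^ 2 * c22))) /
            (μ1 ^ 2 - q ^ 2 * c11))
          (((μ1 * μ2 - q ^ 2 * c12) -
              Real.sqrt ((μ1 * μ2 - q ^ 2 * c12) ^ 2 -
                (μ1 ^ 2 - q ^ 2 * c11) * (μ2 ^ 2 - q ^ 2 * c22))) /
            (μ1 ^ 2 - q ^ 2 * c11)))
        (max
          (((μ1 * μ2 - q ^ 2 * c12) +
              Real.sqrt ((μ1 * μ2 - q ^ 2 * c12) ^ 2 -
                (μ1 ^ 2 - q ^ 2 * c11) * (μ2 ^ 2 - q ^ 2 * c22))) /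
            (μ1 ^ 2 - q ^ 2 * c11))
          (((μ1 * μ2 - q ^ 2 * c12) -
              Real.sqrt ((μ1 * μ2 - q ^ 2 * c12) ^ 2 -
                (μ1 ^ 2 - q ^ 2 * c11) * (μ2 ^ 2 - q ^ 2 * c22))) /
            (μ1 ^ 2 - q ^ 2 * c11))) :=
  stmt_4_general c11 c12 c22 μ1 μ2 q hC hb
end

section
/- Let C be symmetric positive definite 2×2 with entries c11, c12, c22, μ = (μ1,μ2) ∈ ℝ², q > 0, and suppose μ1² > q²·c11 and the discriminant D := (μ1μ2 − q²c12)² − (μ1² − q²c11)(μ2² − q²c22) is positive. Then the two lines through the origin tangent to the ellipse boundary {z : (z−μ)ᵀC⁻¹(z−μ) = q²} have slopes exactly l1 and l2, where l1,2 = ((μ1μ2 − q²c12) ± √D)/(μ1² − q²c11). Equivalently, for r ∈ ℝ, the line {(x, rx)} intersects the boundary ellipse in exactly one point if and only if r ∈ {l1, l2}. -/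
open Matrix

/-!
Along the line `z = (x, r x)` the ellipse equation `(z - μ)ᵀ C⁻¹ (z - μ) = q²` becomes, after
clearing the determinant `d = c11 c22 - c12²`, a quadratic in `x` whose leading coefficient
`(r, -1) C (r, -1)ᵀ` is positive. The line is tangent exactly when this quadratic has a double
root, and its discriminant is `-4 d` times Fieller's quadratic in `r`; so the tangent slopes are
the roots of Fieller's quadratic, given by the usual formula.
-/

/-- Holds without invertibility: for a singular matrix both sides are `0` (junk inverse and
division by zero). -/
theorem Matrix.dotProduct_inv_fin_two_sym_mulVec {K : Type*} [Field K] (a b c : K)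
    (v : Fin 2 → K) :
    v ⬝ᵥ (!![a, b; b, c]⁻¹ *ᵥ v) = (c * v 0 ^ 2 - 2 * b * v 0 * v 1 + a * v 1 ^ 2) / (a * c - b ^ 2) := by
  rw [inv_def, adjugate_fin_two_of, det_fin_two_of, Ring.inverse_eq_inv']
  simp only [dotProduct, mulVec, Fin.sum_univ_two, smul_apply, of_apply, cons_val', cons_val_zero,
    cons_val_one, empty_val', cons_val_fin_one, smul_eq_mul]
  ring

theorem quadratic_eq_zero_iff_of_reduced_discrim_nonneg {a b c : ℝ} (ha : a ≠ 0)
    (hD : 0 ≤ b ^ 2 - a * c) (r : ℝ) :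
    a * r ^ 2 - 2 * b * r + c = 0 ↔
      r = (b + √(b ^ 2 - a * c)) / a ∨ r = (b - √(b ^ 2 - a * c)) / a := by
  have hdiscrim : discrim a (-2 * b) c = (2 * √(b ^ 2 - a * c)) * (2 * √(b ^ 2 - a * c)) := by
    unfold discrim
    linear_combination (-4) * Real.mul_self_sqrt hD
  have hroot (s : ℝ) : (-(-2 * b) + 2 * s) / (2 * a) = (b + s) / a ∧
      (-(-2 * b) - 2 * s) / (2 * a) = (b - s) / a :=
    ⟨by field_simp, by field_simp⟩
  rw [show a * r ^ 2 - 2 * b * r + c = a * (r * r) + (-2 * b) * r + c by ring,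
    quadratic_eq_zero_iff ha hdiscrim, (hroot _).1, (hroot _).2]

theorem existsUnique_line_inter_ellipse_iff {c11 c12 c22 μ1 μ2 k : ℝ}
    (hC : (!![c11, c12; c12, c22] : Matrix (Fin 2) (Fin 2) ℝ).PosDef) (r : ℝ) :
    (∃! x : ℝ, (![x, r * x] - ![μ1, μ2]) ⬝ᵥ
        ((!![c11, c12; c12, c22] : Matrix (Fin 2) (Fin 2) ℝ)⁻¹ *ᵥ (![x, r * x] - ![μ1, μ2])) = k)
      ↔ (μ1 ^ 2 - k * c11) * r ^ 2 - 2 * (μ1 * μ2 - k * c12) * r + (μ2 ^ 2 - k * c22) = 0 := by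
  have hdet : 0 < c11 * c22 - c12 ^ 2 := by
    simpa [det_fin_two_of, sq] using hC.det_pos
  have hlead : 0 < c11 * r ^ 2 - 2 * c12 * r + c22 := by
    refine (hC.dotProduct_mulVec_pos (x := ![r, -1]) ?_).trans_eq ?_
    · simp [funext_iff, Fin.forall_fin_two]
    · simp only [dotProduct, mulVec, Fin.sum_univ_two, Pi.star_apply, star_trivial, of_apply,
        cons_val', cons_val_fin_one, cons_val_zero, cons_val_one]
      ring
  have hquadratic : ∀ x : ℝ,
      (![x, r * x] - ![μ1, μ2]) ⬝ᵥ
          ((!![c11, c12; c12, c22] : Matrix (Fin 2) (Fin 2) ℝ)⁻¹ *ᵥ (![x, r * x] - ![μ1, μ2])) = k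
        ↔ (c11 * r ^ 2 - 2 * c12 * r + c22) * (x * x)
            + (2 * c12 * (μ2 + r * μ1) - 2 * c22 * μ1 - 2 * c11 * r * μ2) * x
            + (c22 * μ1 ^ 2 - 2 * c12 * μ1 * μ2 + c11 * μ2 ^ 2 - k * (c11 * c22 - c12 ^ 2)) = 0 := by
    intro x
    rw [dotProduct_inv_fin_two_sym_mulVec, div_eq_iff hdet.ne']
    simp only [Pi.sub_apply, cons_val_zero, cons_val_one]
    constructor <;> intro h <;> linear_combination h
  rw [existsUnique_congr hquadratic, ← discrim_eq_zero_iff hlead.ne']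
  refine Iff.trans ?_ (mul_eq_zero_iff_left (mul_ne_zero (by norm_num : (-4 : ℝ) ≠ 0) hdet.ne'))
  rw [discrim]
  constructor <;> intro h <;> linear_combination h

theorem stmt_15_general (c11 c12 c22 μ1 μ2 q : ℝ)
    (hC : (!![c11, c12; c12, c22] : Matrix (Fin 2) (Fin 2) ℝ).PosDef)
    (hb : μ1 ^ 2 > q ^ 2 * c11)
    (hD : 0 < (μ1 * μ2 - q ^ 2 * c12) ^ 2 - (μ1 ^ 2 - q ^ 2 * c11) * (μ2 ^ 2 - q ^ 2 * c22)) :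
    ∀ r : ℝ,
      (∃! x : ℝ, (![x, r * x] - ![μ1, μ2]) ⬝ᵥ
          ((!![c11, c12; c12, c22] : Matrix (Fin 2) (Fin 2) ℝ)⁻¹ *ᵥ
            (![x, r * x] - ![μ1, μ2])) = q ^ 2)
        ↔ r = ((μ1 * μ2 - q ^ 2 * c12) +
                Real.sqrt ((μ1 * μ2 - q ^ 2 * c12) ^ 2 -
                  (μ1 ^ 2 - q ^ 2 * c11) * (μ2 ^ 2 - q ^ 2 * c22))) /
              (μ1 ^ 2 - q ^ 2 * c11)
          ∨ r = ((μ1 * μ2 - q ^ 2 * c12) -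
                Real.sqrt ((μ1 * μ2 - q ^ 2 * c12) ^ 2 -
                  (μ1 ^ 2 - q ^ 2 * c11) * (μ2 ^ 2 - q ^ 2 * c22))) /
              (μ1 ^ 2 - q ^ 2 * c11) := by
  intro r
  rw [existsUnique_line_inter_ellipse_iff hC,
    quadratic_eq_zero_iff_of_reduced_discrim_nonneg (by linarith) hD.le]

/-- Tangent slopes: if `μ1² > q²·c11` and the discriminant `D` of Fieller's
quadratic is positive, then for any `r` the line of slope `r` through the origin
meets the boundary ellipse `{z : (z-μ)ᵀC⁻¹(z-μ) = q²}` in exactly one point if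
and only if `r` is one of the two roots `l1, l2` of Fieller's quadratic. -/
theorem stmt_15 (c11 c12 c22 μ1 μ2 q : ℝ) (hq : 0 < q)
    (hC : (!![c11, c12; c12, c22] : Matrix (Fin 2) (Fin 2) ℝ).PosDef)
    (hb : μ1 ^ 2 > q ^ 2 * c11)
    (hD : 0 < (μ1 * μ2 - q ^ 2 * c12) ^ 2 - (μ1 ^ 2 - q ^ 2 * c11) * (μ2 ^ 2 - q ^ 2 * c22)) :
    ∀ r : ℝ,
      (∃! x : ℝ, (![x, r * x] - ![μ1, μ2]) ⬝ᵥ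
          ((!![c11, c12; c12, c22] : Matrix (Fin 2) (Fin 2) ℝ)⁻¹ *ᵥ
            (![x, r * x] - ![μ1, μ2])) = q ^ 2)
        ↔ r = ((μ1 * μ2 - q ^ 2 * c12) +
                Real.sqrt ((μ1 * μ2 - q ^ 2 * c12) ^ 2 -
                  (μ1 ^ 2 - q ^ 2 * c11) * (μ2 ^ 2 - q ^ 2 * c22))) /
              (μ1 ^ 2 - q ^ 2 * c11)
          ∨ r = ((μ1 * μ2 - q ^ 2 * c12) -
                Real.sqrt ((μ1 * μ2 - q ^ 2 * c12) ^ 2 -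
                  (μ1 ^ 2 - q ^ 2 * c11) * (μ2 ^ 2 - q ^ 2 * c22))) /
              (μ1 ^ 2 - q ^ 2 * c11) :=
  stmt_15_general c11 c12 c22 μ1 μ2 q hC hb hD
end
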